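/- Under the uplink pilot model, with c_j := √(τp)·β_j/(1 + τp·Σ_{i=1}^K β_i) and θ_j := τp·β_j²/(1 + τp·Σ_{i=1}^K β_i), the MMSE channel estimate ĥ_j := c_j·ỹ satisfies (1/L)·E[‖ĥ_j‖²] = θ_j. -/

import Mathlib

open MeasureTheory ProbabilityTheory
open scoped BigOperators ComplexConjugate

noncomputable section

/-- `IsCNVec L θ z` means `z` is a complex Gaussian random vector `CN(0, θ I_L)`. -/
def IsCNVec {Ω : Type} [MeasureSpace Ω] (L : ℕ) (θ : ℝ) (z : Ω → Fin L → ℂ) : Prop :=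
  (∀ i, Measurable fun ω => z ω i) ∧
  iIndepFun (fun i ω => z ω i) (volume : Measure Ω) ∧
  (∀ i, IndepFun (fun ω => (z ω i).re) (fun ω => (z ω i).im) (volume : Measure Ω)) ∧
  (∀ i, Measure.map (fun ω => (z ω i).re) (volume : Measure Ω)
      = gaussianReal 0 (θ / 2).toNNReal) ∧
  (∀ i, Measure.map (fun ω => (z ω i).im) (volume : Measure Ω)
      = gaussianReal 0 (θ / 2).toNNReal)

open scoped NNReal ENNReal

/-! Fix a coordinate `i`. The real part of `ỹ_i` is `√τp · Σ_k Re h_{k,i} + Re n_i`, a sum of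
independent centred real Gaussians of variances `τp β_k / 2` and `1 / 2`; for a centred variable the
second moment is the variance, which adds over independent summands, so `E (Re ỹ_i)² =
(1 + τp Σ β_k) / 2`, and likewise for the imaginary part. Hence `E |ỹ_i|² = 1 + τp Σ β_k`, and
`E ‖c_j ỹ‖² / L = c_j² (1 + τp Σ β_k) = θ_j`. -/

section GaussianSecondMoment

variable {Ω : Type*} {mΩ : MeasurableSpace Ω} {P : Measure Ω}

lemma ProbabilityTheory.HasLaw.memLp_of_gaussianReal {X : Ω → ℝ} {m : ℝ} {v : ℝ≥0}
    (hX : HasLaw X (gaussianReal m v) P) {p : ℝ≥0∞} (hp : p ≠ ∞) : MemLp X p P := by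
  have h := memLp_id_gaussianReal' (μ := m) (v := v) p hp
  rw [← hX.map_eq, memLp_map_measure_iff aestronglyMeasurable_id hX.aemeasurable] at h
  exact h

lemma integral_sq_sum_of_iIndepFun_gaussianReal [IsProbabilityMeasure P] {ι : Type*}
    [Fintype ι] {Z : ι → Ω → ℝ} {v : ι → ℝ≥0} (hZ : ∀ m, HasLaw (Z m) (gaussianReal 0 (v m)) P)
    (hindep : iIndepFun Z P) :
    ∫ ω, (∑ m, Z m ω) ^ 2 ∂P = ∑ m, (v m : ℝ) := by
  have hL2 : ∀ m, MemLp (Z m) 2 P := fun m => (hZ m).memLp_of_gaussianReal ENNReal.ofNat_ne_top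
  have hmean : ∫ ω, ∑ m, Z m ω ∂P = 0 := by
    rw [integral_finsetSum _ fun m _ => (hL2 m).integrable one_le_two]
    exact Finset.sum_eq_zero fun m _ => (hZ m).integral_eq.trans integral_id_gaussianReal
  calc ∫ ω, (∑ m, Z m ω) ^ 2 ∂P = Var[∑ m, Z m; P] := by
        rw [variance_eq_sub (memLp_finsetSum' _ fun m _ => hL2 m)]
        simp only [Pi.pow_apply, Finset.sum_apply, hmean]
        ring
    _ = ∑ m, Var[Z m; P] :=
        IndepFun.variance_sum (fun m _ => hL2 m) fun m _ n _ hmn => hindep.indepFun hmn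
    _ = ∑ m, (v m : ℝ) := by simp only [(hZ _).variance_eq, variance_id_gaussianReal]

end GaussianSecondMoment

lemma ProbabilityTheory.iIndepFun.comp_sumElim {Ω ι κ β γ : Type*} {mΩ : MeasurableSpace Ω}
    {P : Measure Ω} [MeasurableSpace β] [MeasurableSpace γ] {f : ι → Ω → β} {g : κ → Ω → β}
    (h : iIndepFun (Sum.elim f g) P) {φ : ι → β → γ} {ψ : κ → β → γ}
    (hφ : ∀ k, Measurable (φ k)) (hψ : ∀ u, Measurable (ψ u)) :
    iIndepFun (Sum.elim (fun k => φ k ∘ f k) (fun u => ψ u ∘ g u)) P := by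
  convert h.comp (Sum.elim φ ψ) (by rintro (k | u) <;> simp [hφ, hψ]) using 1
  ext (k | u) <;> rfl

variable {Ω : Type} [MeasureSpace Ω]

lemma IsCNVec.hasLaw_re {L : ℕ} {θ : ℝ} {z : Ω → Fin L → ℂ} (hz : IsCNVec L θ z) (i : Fin L) :
    HasLaw (fun ω => (z ω i).re) (gaussianReal 0 (θ / 2).toNNReal) :=
  ⟨(Complex.measurable_re.comp (hz.1 i)).aemeasurable, hz.2.2.2.1 i⟩

lemma IsCNVec.hasLaw_im {L : ℕ} {θ : ℝ} {z : Ω → Fin L → ℂ} (hz : IsCNVec L θ z) (i : Fin L) :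
    HasLaw (fun ω => (z ω i).im) (gaussianReal 0 (θ / 2).toNNReal) :=
  ⟨(Complex.measurable_im.comp (hz.1 i)).aemeasurable, hz.2.2.2.2 i⟩

section PilotSignal

variable [IsProbabilityMeasure (volume : Measure Ω)] {L K : ℕ} {τp : ℝ} {β : Fin K → ℝ}
  {h : Fin K → Ω → Fin L → ℂ} {nv : Ω → Fin L → ℂ} {ytil : Ω → Fin L → ℂ}

lemma memLp_and_integral_sq_pilot_proj (hτp : 0 ≤ τp) (hβ : ∀ k, 0 ≤ β k)
    (hindep : iIndepFun
      (Sum.elim (fun k ω => h k ω) (fun _ ω => nv ω) : Fin K ⊕ Unit → Ω → Fin L → ℂ)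
      (volume : Measure Ω))
    (hytil : ∀ ω i, ytil ω i = (Real.sqrt τp : ℂ) * ∑ k, h k ω i + nv ω i)
    (p : ℂ →L[ℝ] ℝ) (i : Fin L)
    (hh : ∀ k, HasLaw (fun ω => p (h k ω i)) (gaussianReal 0 (β k / 2).toNNReal))
    (hn : HasLaw (fun ω => p (nv ω i)) (gaussianReal 0 ((1 : ℝ) / 2).toNNReal)) :
    MemLp (fun ω => p (ytil ω i)) 2 ∧ ∫ ω, p (ytil ω i) ^ 2 = (1 + τp * ∑ k, β k) / 2 := by
  set Z : Fin K ⊕ Unit → Ω → ℝ :=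
    Sum.elim (fun k ω => √τp * p (h k ω i)) (fun _ ω => p (nv ω i))
  have hZ : ∀ m, HasLaw (Z m) (gaussianReal 0 (Sum.elim
      (fun k => .mk (√τp ^ 2) (sq_nonneg _) * (β k / 2).toNNReal)
      (fun _ => ((1 : ℝ) / 2).toNNReal) m)) := by
    rintro (k | u)
    · have hk := gaussianReal_const_mul (hh k) √τp
      rwa [mul_zero] at hk
    · exact hn
  have hZindep : iIndepFun Z :=
    hindep.comp_sumElim (φ := fun _ f => √τp * p (f i)) (ψ := fun _ f => p (f i))
      (fun _ => by fun_prop) (fun _ => by fun_prop)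
  have hdecomp : ∀ ω, p (ytil ω i) = ∑ m, Z m ω := by
    simp [hytil, Z, Fintype.sum_sum_type, ← Complex.real_smul, Finset.mul_sum]
  refine ⟨by simpa only [hdecomp] using
    memLp_finsetSum _ fun m _ => (hZ m).memLp_of_gaussianReal ENNReal.ofNat_ne_top, ?_⟩
  simp only [hdecomp]
  rw [integral_sq_sum_of_iIndepFun_gaussianReal hZ hZindep, Fintype.sum_sum_type]
  have hv : ∀ k, ((β k / 2).toNNReal : ℝ) = β k / 2 :=
    fun k => Real.coe_toNNReal _ (div_nonneg (hβ k) zero_le_two)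
  have hvk : ∀ k,
      ((.mk (√τp ^ 2) (sq_nonneg _) * (β k / 2).toNNReal : ℝ≥0) : ℝ) = τp * (β k / 2) :=
    fun k => by rw [NNReal.coe_mul, NNReal.coe_mk, hv, Real.sq_sqrt hτp]
  simp only [Sum.elim_inl, Sum.elim_inr, Fintype.sum_unique, hvk]
  rw [← Finset.mul_sum, ← Finset.sum_div, Real.coe_toNNReal _ (by norm_num)]
  ring

lemma integrable_and_integral_normSq_pilot (hτp : 0 ≤ τp) (hβ : ∀ k, 0 ≤ β k)
    (hh : ∀ k, IsCNVec L (β k) (h k)) (hn : IsCNVec L 1 nv)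
    (hindep : iIndepFun
      (Sum.elim (fun k ω => h k ω) (fun _ ω => nv ω) : Fin K ⊕ Unit → Ω → Fin L → ℂ)
      (volume : Measure Ω))
    (hytil : ∀ ω i, ytil ω i = (Real.sqrt τp : ℂ) * ∑ k, h k ω i + nv ω i) (i : Fin L) :
    Integrable (fun ω => Complex.normSq (ytil ω i)) ∧
      ∫ ω, Complex.normSq (ytil ω i) = 1 + τp * ∑ k, β k := by
  obtain ⟨hre_memLp, hre⟩ :=
    memLp_and_integral_sq_pilot_proj hτp hβ hindep hytil Complex.reCLM i
      (fun k => (hh k).hasLaw_re i) (hn.hasLaw_re i)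
  obtain ⟨him_memLp, him⟩ :=
    memLp_and_integral_sq_pilot_proj hτp hβ hindep hytil Complex.imCLM i
      (fun k => (hh k).hasLaw_im i) (hn.hasLaw_im i)
  simp only [Complex.reCLM_apply, Complex.imCLM_apply] at hre_memLp hre him_memLp him
  simp only [Complex.normSq_apply, ← sq]
  refine ⟨hre_memLp.integrable_sq.add him_memLp.integrable_sq, ?_⟩
  rw [integral_add hre_memLp.integrable_sq him_memLp.integrable_sq, hre, him]
  ring

end PilotSignal

theorem mmse_estimate_mean_square_general
    {Ω : Type} [MeasureSpace Ω] [IsProbabilityMeasure (volume : Measure Ω)]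
    (L K : ℕ) (hL : 0 < L) (τp : ℝ) (hτp : 0 < τp)
    (β : Fin K → ℝ) (hβ : ∀ k, 0 < β k)
    (h : Fin K → Ω → Fin L → ℂ) (nv : Ω → Fin L → ℂ)
    (hh : ∀ k, IsCNVec L (β k) (h k)) (hn : IsCNVec L 1 nv)
    (hindep : iIndepFun
      (Sum.elim (fun k ω => h k ω) (fun _ ω => nv ω) : Fin K ⊕ Unit → Ω → Fin L → ℂ)
      (volume : Measure Ω))
    (ytil : Ω → Fin L → ℂ)
    (hytil : ∀ ω i, ytil ω i = (Real.sqrt τp : ℂ) * ∑ k, h k ω i + nv ω i)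
    (j : Fin K)
    (c θj : ℝ)
    (hc : c = Real.sqrt τp * β j / (1 + τp * ∑ i, β i))
    (hθj : θj = τp * β j ^ 2 / (1 + τp * ∑ i, β i)) :
    (1 / (L : ℝ)) * ∫ ω, ∑ i, Complex.normSq ((c : ℂ) * ytil ω i) = θj := by
  have hcoord :=
    integrable_and_integral_normSq_pilot hτp.le (fun k => (hβ k).le) hh hn hindep hytil
  have hD : 0 < 1 + τp * ∑ i, β i :=
    add_pos_of_pos_of_nonneg one_pos (mul_nonneg hτp.le (Finset.sum_nonneg fun k _ => (hβ k).le))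
  have hL' : (L : ℝ) ≠ 0 := Nat.cast_ne_zero.mpr hL.ne'
  calc (1 / (L : ℝ)) * ∫ ω, ∑ i, Complex.normSq ((c : ℂ) * ytil ω i)
      = (1 / (L : ℝ)) * ∑ _i : Fin L, c ^ 2 * (1 + τp * ∑ k, β k) := by
        simp only [Complex.normSq_mul, Complex.normSq_ofReal, ← sq]
        rw [integral_finsetSum _ fun i _ => (hcoord i).1.const_mul _]
        simp only [integral_const_mul, (hcoord _).2]
    _ = θj := by
        rw [Finset.sum_const, Finset.card_univ, Fintype.card_fin, nsmul_eq_mul, hc, hθj, div_pow,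
          mul_pow, Real.sq_sqrt hτp.le]
        field_simp

/-- Uplink pilot model: the MMSE channel estimate `ĥ_j = c_j·ỹ` satisfies `(1/L)·E[‖ĥ_j‖²] = θ_j`. -/
theorem mmse_estimate_mean_square
    {Ω : Type} [MeasureSpace Ω] [IsProbabilityMeasure (volume : Measure Ω)]
    (L K : ℕ) (hL : 0 < L) (hK : 0 < K) (τp : ℝ) (hτp : 0 < τp)
    (β : Fin K → ℝ) (hβ : ∀ k, 0 < β k)
    (h : Fin K → Ω → Fin L → ℂ) (nv : Ω → Fin L → ℂ)
    (hh : ∀ k, IsCNVec L (β k) (h k)) (hn : IsCNVec L 1 nv)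
    (hindep : iIndepFun
      (Sum.elim (fun k ω => h k ω) (fun _ ω => nv ω) : Fin K ⊕ Unit → Ω → Fin L → ℂ)
      (volume : Measure Ω))
    (ytil : Ω → Fin L → ℂ)
    (hytil : ∀ ω i, ytil ω i = (Real.sqrt τp : ℂ) * ∑ k, h k ω i + nv ω i)
    (j : Fin K)
    (c θj : ℝ)
    (hc : c = Real.sqrt τp * β j / (1 + τp * ∑ i, β i))
    (hθj : θj = τp * β j ^ 2 / (1 + τp * ∑ i, β i)) :
    (1 / (L : ℝ)) * ∫ ω, ∑ i, Complex.normSq ((c : ℂ) * ytil ω i) = θj :=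
  mmse_estimate_mean_square_general L K hL τp hτp β hβ h nv hh hn hindep ytil hytil j c θj hc hθj
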